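/- arXiv:nlin/0406035 — 2 statements merged into one kernel-verified Lean document; each statement's English description precedes it below -/
import Mathlib

section
/- Let α ∈ ℂ and let φ, ψ : ℂ → ℂ be entire functions satisfying ψ''(x) = (2x − 2ψ(x)φ(x))·ψ(x) and φ''(x) = (2x − 2ψ(x)φ(x))·φ(x) for all x ∈ ℂ, together with φ'(x)ψ(x) − φ(x)ψ'(x) = 2α for all x ∈ ℂ. Assume ψ(x) ≠ 0 for all x ∈ ℂ. Then the function u₋₁ := −ψ'/ψ satisfies the Painlevé II equation with parameter α − 1: u₋₁''(x) = 2u₋₁(x)³ − 4x·u₋₁(x) + 4(α − 1/2) for all x ∈ ℂ. -/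
/-!
Since `ψ'' = (2x - 2ψφ) ψ`, the function `u = -ψ'/ψ` solves the Riccati equation
`u' = u² - 2x + 2ψφ`. Differentiating once more gives `u'' = 2uu' - 2 + 2(ψφ)'`, and substituting
`uψ = -ψ'` turns this into `2u³ - 4xu - 2 + 2(φ'ψ - φψ')`, where the Wronskian equals `2α`.
-/

section LogDeriv

variable {𝕜 : Type*} [NontriviallyNormedField 𝕜] {f : 𝕜 → 𝕜} {x : 𝕜}

theorem hasDerivAt_logDeriv (hf : DifferentiableAt 𝕜 f x) (hf' : DifferentiableAt 𝕜 (deriv f) x)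
    (hx : f x ≠ 0) :
    HasDerivAt (logDeriv f) (deriv (deriv f) x / f x - logDeriv f x ^ 2) x :=
  (hf'.hasDerivAt.div hf.hasDerivAt hx).congr_deriv <| by
    rw [logDeriv_apply]
    field_simp

theorem hasDerivAt_logDeriv_of_deriv_deriv_eq_mul {q : 𝕜 → 𝕜} (hf : DifferentiableAt 𝕜 f x)
    (hf' : DifferentiableAt 𝕜 (deriv f) x) (hx : f x ≠ 0) (hq : deriv (deriv f) x = q x * f x) :
    HasDerivAt (logDeriv f) (q x - logDeriv f x ^ 2) x := by
  simpa only [hq, mul_div_cancel_right₀ _ hx] using hasDerivAt_logDeriv hf hf' hx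

end LogDeriv

theorem um1_satisfies_painleveII_general
    (α : ℂ) (φ ψ : ℂ → ℂ) (hφ : Differentiable ℂ φ) (hψ : Differentiable ℂ ψ)
    (hψ'' : ∀ x : ℂ, deriv (deriv ψ) x = (2 * x - 2 * ψ x * φ x) * ψ x)
    (hW : ∀ x : ℂ, deriv φ x * ψ x - φ x * deriv ψ x = 2 * α)
    (hψ0 : ∀ x : ℂ, ψ x ≠ 0) :
    ∀ x : ℂ,
      deriv (deriv (fun y => -(deriv ψ y / ψ y))) x =
        2 * (-(deriv ψ x / ψ x)) ^ 3 - 4 * x * (-(deriv ψ x / ψ x)) + 4 * (α - 1 / 2) := by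
  have hψ' : Differentiable ℂ (deriv ψ) := hψ.deriv
  have riccati (y : ℂ) :=
    hasDerivAt_logDeriv_of_deriv_deriv_eq_mul (q := fun y => 2 * y - 2 * ψ y * φ y)
      (hψ y) (hψ' y) (hψ0 y) (hψ'' y)
  have hu' : deriv (fun y => -logDeriv ψ y) =
      fun y => logDeriv ψ y ^ 2 - (2 * y - 2 * (ψ y * φ y)) := by
    funext y
    rw [(riccati y).fun_neg.deriv]
    ring
  intro x
  change deriv (deriv fun y => -logDeriv ψ y) x = _
  have hψφ := (hψ x).hasDerivAt.fun_mul (hφ x).hasDerivAt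
  rw [hu', (((riccati x).fun_pow 2).fun_sub
    (((hasDerivAt_id' x).const_mul 2).fun_sub (hψφ.const_mul 2))).deriv, logDeriv_apply]
  norm_num
  field_simp [hψ0 x]
  linear_combination (4 * ψ x ^ 3) * hW x

/-- **Proposition 2.2 (ii).** If entire functions `φ, ψ` satisfy
`ψ''/ψ = φ''/φ = −2ψφ + 2x` and `φ'ψ − φψ' = 2α`, with `ψ` nowhere vanishing,
then `u₋₁ = −(log ψ)' = −ψ'/ψ` satisfies Painlevé II with parameter `α − 1`:
`u₋₁'' = 2u₋₁³ − 4xu₋₁ + 4(α − 1/2)`. -/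
theorem um1_satisfies_painleveII
    (α : ℂ) (φ ψ : ℂ → ℂ) (hφ : Differentiable ℂ φ) (hψ : Differentiable ℂ ψ)
    (hψ'' : ∀ x : ℂ, deriv (deriv ψ) x = (2 * x - 2 * ψ x * φ x) * ψ x)
    (hφ'' : ∀ x : ℂ, deriv (deriv φ) x = (2 * x - 2 * ψ x * φ x) * φ x)
    (hW : ∀ x : ℂ, deriv φ x * ψ x - φ x * deriv ψ x = 2 * α)
    (hψ0 : ∀ x : ℂ, ψ x ≠ 0) :
    ∀ x : ℂ,
      deriv (deriv (fun y => -(deriv ψ y / ψ y))) x =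
        2 * (-(deriv ψ x / ψ x)) ^ 3 - 4 * x * (-(deriv ψ x / ψ x)) + 4 * (α - 1 / 2) :=
  um1_satisfies_painleveII_general α φ ψ hφ hψ hψ'' hW hψ0
end

section
/- Let α ∈ ℂ and let φ, ψ : ℂ → ℂ be entire functions with φ nowhere vanishing, satisfying ψ''(x) = (2x − 2ψ(x)φ(x))·ψ(x), φ''(x) = (2x − 2ψ(x)φ(x))·φ(x), and φ'(x)ψ(x) − φ(x)ψ'(x) = 2α for all x ∈ ℂ. Set z := −ψφ, u₀ := φ'/φ, and let C, D be the matrices C(x,t) = [[t²/4 − z/2 − x/2, −(φ/2)(t − u₀)], [−(1/φ)((u₀ + t)z/2 + α), −t²/4 + z/2 + x/2]], D(x,t) = [[−t/2, φ], [z/φ, t/2]]. Suppose Z₁, Z₂ : ℂ × ℂ → ℂ are differentiable in (x,t), satisfy ∂Z/∂t = CZ and ∂Z/∂x = DZ for Z = (Z₁, Z₂)ᵀ, and Z₁ is nowhere zero. Then G(x,t) := t·Z₂(x,t)/Z₁(x,t) satisfies both Riccati equations: t·∂G/∂x = −φG² + t²G − t²ψ, and 2t·∂G/∂t = −(φ'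 − tφ)G² + ((φ''/φ)t + 2 − t³)G + t²(ψ' + tψ), for all (x,t) ∈ ℂ². -/
/-!
The ratio `w = Z₂/Z₁` of the two components of a solution of a linear system `Z' = AZ`
satisfies the Riccati equation `w' = A₁₀ + (A₁₁ - A₀₀) w - A₀₁ w²`. Applying this to both
the `x`- and the `t`-equation, `G = t w` gives the two Riccati equations after substituting
`z = -ψφ`, `u₀ = φ'/φ`, `φ''/φ = 2x + 2z` and `2α = φ'ψ - φψ'`.
-/

/-- Matrix `C` of the isomonodromic system for Painlevé II with parameter `α`. -/
noncomputable def Cmat (α : ℂ) (φ z u : ℂ → ℂ) (x t : ℂ) : Matrix (Fin 2) (Fin 2) ℂ :=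
  !![t ^ 2 / 4 - z x / 2 - x / 2, -(φ x / 2) * (t - u x);
     -(1 / φ x) * ((u x + t) * z x / 2 + α), -t ^ 2 / 4 + z x / 2 + x / 2]

/-- Matrix `D` of the isomonodromic system for Painlevé II with parameter `α`. -/
noncomputable def Dmat (φ z : ℂ → ℂ) (x t : ℂ) : Matrix (Fin 2) (Fin 2) ℂ :=
  !![-t / 2, φ x;
     z x / φ x, t / 2]

section

variable {𝕜 : Type*} [NontriviallyNormedField 𝕜]

theorem HasDerivAt.div_of_linear_system {f₁ f₂ : 𝕜 → 𝕜} {x a b c d : 𝕜}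
    (h₁ : HasDerivAt f₁ (a * f₁ x + b * f₂ x) x) (h₂ : HasDerivAt f₂ (c * f₁ x + d * f₂ x) x)
    (h0 : f₁ x ≠ 0) :
    HasDerivAt (fun y => f₂ y / f₁ y)
      (c + (d - a) * (f₂ x / f₁ x) - b * (f₂ x / f₁ x) ^ 2) x := by
  refine (h₂.fun_div h₁ h0).congr_deriv ?_
  field_simp
  ring

variable {E F G : Type*} [NormedAddCommGroup E] [NormedSpace 𝕜 E] [NormedAddCommGroup F]
  [NormedSpace 𝕜 F] [NormedAddCommGroup G] [NormedSpace 𝕜 G]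

theorem Differentiable.of_uncurry_left {f : E → F → G}
    (hf : Differentiable 𝕜 fun p : E × F => f p.1 p.2) (y : F) :
    Differentiable 𝕜 fun x => f x y :=
  hf.comp (differentiable_id.prodMk (differentiable_const y))

theorem Differentiable.of_uncurry_right {f : E → F → G}
    (hf : Differentiable 𝕜 fun p : E × F => f p.1 p.2) (x : E) :
    Differentiable 𝕜 fun y => f x y :=
  hf.comp ((differentiable_const x).prodMk differentiable_id)

end

theorem linear_system_solution_gives_riccati_G_general
    (α : ℂ) (φ ψ : ℂ → ℂ)
    (hφ0 : ∀ x : ℂ, φ x ≠ 0)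
    (hφ'' : ∀ x : ℂ, deriv (deriv φ) x = (2 * x - 2 * ψ x * φ x) * φ x)
    (hW : ∀ x : ℂ, deriv φ x * ψ x - φ x * deriv ψ x = 2 * α)
    (z u : ℂ → ℂ)
    (hz : z = fun x => -(ψ x * φ x))
    (hu : u = fun x => deriv φ x / φ x)
    (Z₁ Z₂ : ℂ → ℂ → ℂ)
    (hZ₁diff : Differentiable ℂ fun p : ℂ × ℂ => Z₁ p.1 p.2)
    (hZ₂diff : Differentiable ℂ fun p : ℂ × ℂ => Z₂ p.1 p.2)
    (hZ₁t : ∀ x t : ℂ, deriv (fun s => Z₁ x s) t =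
      Cmat α φ z u x t 0 0 * Z₁ x t + Cmat α φ z u x t 0 1 * Z₂ x t)
    (hZ₂t : ∀ x t : ℂ, deriv (fun s => Z₂ x s) t =
      Cmat α φ z u x t 1 0 * Z₁ x t + Cmat α φ z u x t 1 1 * Z₂ x t)
    (hZ₁x : ∀ x t : ℂ, deriv (fun y => Z₁ y t) x =
      Dmat φ z x t 0 0 * Z₁ x t + Dmat φ z x t 0 1 * Z₂ x t)
    (hZ₂x : ∀ x t : ℂ, deriv (fun y => Z₂ y t) x =
      Dmat φ z x t 1 0 * Z₁ x t + Dmat φ z x t 1 1 * Z₂ x t)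
    (hZ₁0 : ∀ x t : ℂ, Z₁ x t ≠ 0)
    (G : ℂ → ℂ → ℂ)
    (hG : ∀ x t : ℂ, G x t = t * Z₂ x t / Z₁ x t) :
    ∀ x t : ℂ,
      t * deriv (fun y => G y t) x = -φ x * (G x t) ^ 2 + t ^ 2 * G x t - t ^ 2 * ψ x
        ∧
      2 * t * deriv (fun s => G x s) t =
        -(deriv φ x - t * φ x) * (G x t) ^ 2
          + ((deriv (deriv φ) x / φ x) * t + 2 - t ^ 3) * G x t
          + t ^ 2 * (deriv ψ x + t * ψ x) := by
  intro x t
  have hwx := HasDerivAt.div_of_linear_system (f₁ := fun y => Z₁ y t) (f₂ := fun y => Z₂ y t)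
    (hZ₁x x t ▸ ((hZ₁diff.of_uncurry_left t) x).hasDerivAt)
    (hZ₂x x t ▸ ((hZ₂diff.of_uncurry_left t) x).hasDerivAt) (hZ₁0 x t)
  have hwt := HasDerivAt.div_of_linear_system (f₁ := Z₁ x) (f₂ := Z₂ x)
    (hZ₁t x t ▸ ((hZ₁diff.of_uncurry_right x) t).hasDerivAt)
    (hZ₂t x t ▸ ((hZ₂diff.of_uncurry_right x) t).hasDerivAt) (hZ₁0 x t)
  have hGw : G = fun x t => t * (Z₂ x t / Z₁ x t) := by
    ext x t
    rw [hG, mul_div_assoc]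
  obtain rfl : α = (deriv φ x * ψ x - φ x * deriv ψ x) / 2 := by
    linear_combination (-1 / 2 : ℂ) * hW x
  subst hGw hz hu
  rw [(hwx.const_mul t).deriv, ((hasDerivAt_id' t).fun_mul hwt).deriv, hφ'']
  simp only [Cmat, Dmat, Matrix.of_apply, Matrix.cons_val', Matrix.cons_val_zero,
    Matrix.cons_val_one, Matrix.empty_val', Matrix.cons_val_fin_one]
  field_simp [hφ0 x, hZ₁0 x t]
  constructor <;> ring

/-- **Remark 2.9 (converse direction for `G`).** If `Z = (Z₁, Z₂)ᵀ` solves the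
isomonodromic linear system `∂Z/∂t = CZ`, `∂Z/∂x = DZ` (with `z = −ψφ`, `u₀ = φ'/φ`)
and `Z₁` is nowhere zero, then `G = t·Z₂/Z₁` satisfies both Riccati equations
`t G_x = −φG² + t²G − t²ψ` and
`2t G_t = −(φ' − tφ)G² + ((φ''/φ)t + 2 − t³)G + t²(ψ' + tψ)`. -/
theorem linear_system_solution_gives_riccati_G
    (α : ℂ) (φ ψ : ℂ → ℂ) (hφ : Differentiable ℂ φ) (hψ : Differentiable ℂ ψ)
    (hφ0 : ∀ x : ℂ, φ x ≠ 0)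
    (hψ'' : ∀ x : ℂ, deriv (deriv ψ) x = (2 * x - 2 * ψ x * φ x) * ψ x)
    (hφ'' : ∀ x : ℂ, deriv (deriv φ) x = (2 * x - 2 * ψ x * φ x) * φ x)
    (hW : ∀ x : ℂ, deriv φ x * ψ x - φ x * deriv ψ x = 2 * α)
    (z u : ℂ → ℂ)
    (hz : z = fun x => -(ψ x * φ x))
    (hu : u = fun x => deriv φ x / φ x)
    (Z₁ Z₂ : ℂ → ℂ → ℂ)
    (hZ₁diff : Differentiable ℂ fun p : ℂ × ℂ => Z₁ p.1 p.2)
    (hZ₂diff : Differentiable ℂ fun p : ℂ × ℂ => Z₂ p.1 p.2)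
    (hZ₁t : ∀ x t : ℂ, deriv (fun s => Z₁ x s) t =
      Cmat α φ z u x t 0 0 * Z₁ x t + Cmat α φ z u x t 0 1 * Z₂ x t)
    (hZ₂t : ∀ x t : ℂ, deriv (fun s => Z₂ x s) t =
      Cmat α φ z u x t 1 0 * Z₁ x t + Cmat α φ z u x t 1 1 * Z₂ x t)
    (hZ₁x : ∀ x t : ℂ, deriv (fun y => Z₁ y t) x =
      Dmat φ z x t 0 0 * Z₁ x t + Dmat φ z x t 0 1 * Z₂ x t)
    (hZ₂x : ∀ x t : ℂ, deriv (fun y => Z₂ y t) x =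
      Dmat φ z x t 1 0 * Z₁ x t + Dmat φ z x t 1 1 * Z₂ x t)
    (hZ₁0 : ∀ x t : ℂ, Z₁ x t ≠ 0)
    (G : ℂ → ℂ → ℂ)
    (hG : ∀ x t : ℂ, G x t = t * Z₂ x t / Z₁ x t) :
    ∀ x t : ℂ,
      t * deriv (fun y => G y t) x = -φ x * (G x t) ^ 2 + t ^ 2 * G x t - t ^ 2 * ψ x
        ∧
      2 * t * deriv (fun s => G x s) t =
        -(deriv φ x - t * φ x) * (G x t) ^ 2
          + ((deriv (deriv φ) x / φ x) * t + 2 - t ^ 3) * G x t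
          + t ^ 2 * (deriv ψ x + t * ψ x) :=
  linear_system_solution_gives_riccati_G_general α φ ψ hφ0 hφ'' hW z u hz hu Z₁ Z₂ hZ₁diff hZ₂diff
    hZ₁t hZ₂t hZ₁x hZ₂x hZ₁0 G hG
end
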